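/- The gauge charge operator d_Q defined on the jet variables of linearized gravity by d_Q h_{μν} = -(i/2)(d_μ u_ν + d_ν u_μ - η_{μν} d_ρ u^ρ), d_Q u_ρ = 0, d_Q ũ_σ = i d^λ h_{σλ} squares to zero modulo the wave equations □h_{μν}=0, □u_μ=0, □ũ_μ=0 for the fields; in particular d_Q^2 ũ_σ = 0 identically as a polynomial expression once one uses that d^μ applied twice contracts symmetrically. -/
import Mathlib

set_option maxHeartbeats 1000000

/-- The Minkowski metric `η = diag(1,-1,-1,-1)` (with complex values, used both for
lowered and raised indices since it is its own inverse). -/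
def eta (μ ν : Fin 4) : ℂ := if μ = ν then (if μ = (0 : Fin 4) then 1 else -1) else 0

/-- The gauge charge `d_Q` of linearized gravity, defined on the jet variables by
`d_Q h_{μν} = -(i/2)(d_μ u_ν + d_ν u_μ - η_{μν} d_ρ u^ρ)`, `d_Q u_ρ = 0`,
`d_Q ũ_σ = i d^λ h_{σλ}`, squares to zero on all generators modulo the wave equations
`□h = 0`, `□u = 0`, `□ũ = 0`. -/
theorem gauge_charge_squares_to_zero_mod_eom
    {A : Type*} [AddCommGroup A] [Module ℂ A]
    (d : Fin 4 → A →ₗ[ℂ] A)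
    (hdcomm : ∀ μ ν (a : A), d μ (d ν a) = d ν (d μ a))
    (dQ : A →ₗ[ℂ] A)
    (hdQd : ∀ μ (a : A), dQ (d μ a) = d μ (dQ a))
    (h : Fin 4 → Fin 4 → A) (u ut : Fin 4 → A)
    (hsym : ∀ μ ν, h μ ν = h ν μ)
    (hQh : ∀ μ ν, dQ (h μ ν) = (-(Complex.I / 2)) •
      (d μ (u ν) + d ν (u μ) - eta μ ν • ∑ ρ, ∑ σ, eta ρ σ • d ρ (u σ)))
    (hQu : ∀ ρ, dQ (u ρ) = 0)
    (hQut : ∀ σ, dQ (ut σ) = Complex.I • ∑ lam, ∑ τ, eta lam τ • d τ (h σ lam))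
    (KGh : ∀ μ ν', (∑ μ', ∑ ν, eta μ' ν • d μ' (d ν (h μ ν'))) = 0)
    (KGu : ∀ σ, (∑ μ, ∑ ν, eta μ ν • d μ (d ν (u σ))) = 0)
    (KGut : ∀ σ, (∑ μ, ∑ ν, eta μ ν • d μ (d ν (ut σ))) = 0) :
    (∀ μ ν, dQ (dQ (h μ ν)) = 0) ∧ (∀ ρ, dQ (dQ (u ρ)) = 0) ∧
      (∀ σ, dQ (dQ (ut σ)) = 0) := by
  refine ⟨?_, ?_, ?_⟩
  · intro μ ν
    rw [hQh]
    simp [hdQd, hQu]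
  · intro ρ
    rw [hQu, map_zero]
  · intro σ
    have h0 : dQ (dQ (ut 0)) = 0 := by
      have key : dQ (dQ (ut 0)) =
          dQ (dQ (ut 0)) - (-(Complex.I * (Complex.I / 2))) •
            (∑ μ, ∑ ν, eta μ ν • d μ (d ν (u 0))) := by
        rw [KGu 0, smul_zero, sub_zero]
      rw [key, hQut]
      simp only [map_smul, map_sum, hdQd, hQh, map_add, map_sub, Fin.sum_univ_four]
      simp only [eta, Fin.reduceEq, reduceIte, Fin.isValue, one_smul, neg_smul, zero_smul,
        smul_add, smul_sub, smul_neg, map_add, map_sub, map_smul, map_neg, map_zero, sub_zero]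
      simp only [hdcomm 1 0, hdcomm 2 0, hdcomm 3 0, hdcomm 2 1, hdcomm 3 1, hdcomm 3 2]
      module
    have h1 : dQ (dQ (ut 1)) = 0 := by
      have key : dQ (dQ (ut 1)) =
          dQ (dQ (ut 1)) - (-(Complex.I * (Complex.I / 2))) •
            (∑ μ, ∑ ν, eta μ ν • d μ (d ν (u 1))) := by
        rw [KGu 1, smul_zero, sub_zero]
      rw [key, hQut]
      simp only [map_smul, map_sum, hdQd, hQh, map_add, map_sub, Fin.sum_univ_four]
      simp only [eta, Fin.reduceEq, reduceIte, Fin.isValue, one_smul, neg_smul, zero_smul,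
        smul_add, smul_sub, smul_neg, map_add, map_sub, map_smul, map_neg, map_zero, sub_zero]
      simp only [hdcomm 1 0, hdcomm 2 0, hdcomm 3 0, hdcomm 2 1, hdcomm 3 1, hdcomm 3 2]
      module
    have h2 : dQ (dQ (ut 2)) = 0 := by
      have key : dQ (dQ (ut 2)) =
          dQ (dQ (ut 2)) - (-(Complex.I * (Complex.I / 2))) •
            (∑ μ, ∑ ν, eta μ ν • d μ (d ν (u 2))) := by
        rw [KGu 2, smul_zero, sub_zero]
      rw [key, hQut]
      simp only [map_smul, map_sum, hdQd, hQh, map_add, map_sub, Fin.sum_univ_four]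
      simp only [eta, Fin.reduceEq, reduceIte, Fin.isValue, one_smul, neg_smul, zero_smul,
        smul_add, smul_sub, smul_neg, map_add, map_sub, map_smul, map_neg, map_zero, sub_zero]
      simp only [hdcomm 1 0, hdcomm 2 0, hdcomm 3 0, hdcomm 2 1, hdcomm 3 1, hdcomm 3 2]
      module
    have h3 : dQ (dQ (ut 3)) = 0 := by
      have key : dQ (dQ (ut 3)) =
          dQ (dQ (ut 3)) - (-(Complex.I * (Complex.I / 2))) •
            (∑ μ, ∑ ν, eta μ ν • d μ (d ν (u 3))) := by
        rw [KGu 3, smul_zero, sub_zero]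
      rw [key, hQut]
      simp only [map_smul, map_sum, hdQd, hQh, map_add, map_sub, Fin.sum_univ_four]
      simp only [eta, Fin.reduceEq, reduceIte, Fin.isValue, one_smul, neg_smul, zero_smul,
        smul_add, smul_sub, smul_neg, map_add, map_sub, map_smul, map_neg, map_zero, sub_zero]
      simp only [hdcomm 1 0, hdcomm 2 0, hdcomm 3 0, hdcomm 2 1, hdcomm 3 1, hdcomm 3 2]
      module
    fin_cases σ
    exacts [h0, h1, h2, h3]
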